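/- If A ⊆ ℕ is an r-cohesive set (i.e., A is infinite and for every computable set S, at least one of A ∩ S and A ∩ (ℕ \ S) is finite), then A has asymptotic density 0. -/

import Mathlib

/-! A cohesive set is, for every `k`, almost contained in a single residue class mod `k`, since
the `k` residue classes are computable and cover `ℕ`. A residue class has density `1 / k`, so the
upper density of the set is at most `1 / k` for every `k`. -/

open Filter Topology

noncomputable def pdens (S : Set ℕ) (n : ℕ) : ℝ := (S ∩ Set.Iio n).ncard / n

noncomputable def lowerDensity (S : Set ℕ) : ℝ := liminf (pdens S) atTop

noncomputable def upperDensity (S : Set ℕ) : ℝ := limsup (pdens S) atTop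

lemma computablePred_mod_eq (k j : ℕ) : ComputablePred fun m : ℕ => m % k = j :=
  (Primrec.eq.comp (Primrec.nat_mod.comp .id (.const k)) (.const j)).computablePred

lemma exists_diff_finite_of_cohesive {ι : Type*} [Finite ι] {A : Set ℕ} (hinf : A.Infinite)
    (hcoh : ∀ S : Set ℕ, ComputablePred (· ∈ S) → (A ∩ S).Finite ∨ (A ∩ Sᶜ).Finite)
    (s : ι → Set ℕ) (hs : ∀ i, ComputablePred (· ∈ s i))
    (hcover : ⋃ i, s i = Set.univ) :
    ∃ i, (A \ s i).Finite := by
  by_contra! hdiff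
  have hfin : ∀ i, (A ∩ s i).Finite := fun i => (hcoh _ (hs i)).resolve_right (hdiff i)
  refine hinf ((Set.finite_iUnion hfin).subset fun a ha => ?_)
  obtain ⟨i, hi⟩ := Set.mem_iUnion.mp (hcover ▸ Set.mem_univ a)
  exact Set.mem_iUnion.mpr ⟨i, ha, hi⟩

lemma ncard_mod_eq_inter_Iio_le (k j n : ℕ) :
    ({m : ℕ | m % k = j} ∩ Set.Iio n).ncard ≤ n / k + 1 := by
  calc ({m : ℕ | m % k = j} ∩ Set.Iio n).ncard ≤ (Set.Iio (n / k + 1)).ncard := by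
        refine Set.ncard_le_ncard_of_injOn (· / k) ?_ ?_ (Set.finite_Iio _)
        · rintro m ⟨-, hmn⟩
          exact Nat.lt_succ_of_le (Nat.div_le_div_right (le_of_lt hmn))
        · rintro m₁ ⟨h₁, -⟩ m₂ ⟨h₂, -⟩ h
          rw [← Nat.div_add_mod m₁ k, ← Nat.div_add_mod m₂ k, h₁, h₂]
          exact congrArg (k * · + j) h
    _ = n / k + 1 := by simp

lemma ncard_inter_Iio_le_of_diff_mod_eq_finite {A : Set ℕ} {k j : ℕ}
    (hA : (A \ {m | m % k = j}).Finite) (n : ℕ) :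
    (A ∩ Set.Iio n).ncard ≤ n / k + 1 + (A \ {m | m % k = j}).ncard := by
  have hsub : A ∩ Set.Iio n ⊆ ({m | m % k = j} ∩ Set.Iio n) ∪ (A \ {m | m % k = j}) := by
    rintro m ⟨hmA, hmn⟩
    by_cases hm : m % k = j
    · exact .inl ⟨hm, hmn⟩
    · exact .inr ⟨hmA, hm⟩
  calc (A ∩ Set.Iio n).ncard
      ≤ (({m | m % k = j} ∩ Set.Iio n) ∪ (A \ {m | m % k = j})).ncard :=
        Set.ncard_le_ncard hsub (((Set.finite_Iio n).inter_of_right _).union hA)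
    _ ≤ ({m | m % k = j} ∩ Set.Iio n).ncard + (A \ {m | m % k = j}).ncard :=
        Set.ncard_union_le _ _
    _ ≤ n / k + 1 + (A \ {m | m % k = j}).ncard := by
        gcongr
        exact ncard_mod_eq_inter_Iio_le k j n

lemma pdens_nonneg (A : Set ℕ) (n : ℕ) : 0 ≤ pdens A n := by
  unfold pdens
  positivity

lemma pdens_le_of_diff_mod_eq_finite {A : Set ℕ} {k j : ℕ} (hA : (A \ {m | m % k = j}).Finite)
    (n : ℕ) : pdens A n ≤ 1 / k + (1 + (A \ {m | m % k = j}).ncard) / n := by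
  rcases Nat.eq_zero_or_pos n with rfl | hn
  · simp [pdens]
  set c := (A \ {m | m % k = j}).ncard
  have hcount : ((A ∩ Set.Iio n).ncard : ℝ) ≤ n / k + (1 + c) :=
    calc ((A ∩ Set.Iio n).ncard : ℝ) ≤ ((n / k : ℕ) : ℝ) + (1 + c) := by
          exact_mod_cast (ncard_inter_Iio_le_of_diff_mod_eq_finite hA n).trans_eq (add_assoc ..)
      _ ≤ n / k + (1 + c) := by grw [Nat.cast_div_le]
  calc pdens A n ≤ (n / k + (1 + c)) / n := by unfold pdens; gcongr
    _ = 1 / k + (1 + c) / n := by field_simp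

lemma tendsto_pdens_zero_of_forall_diff_mod_eq_finite {A : Set ℕ}
    (h : ∀ k, 0 < k → ∃ j, (A \ {m | m % k = j}).Finite) :
    Tendsto (pdens A) atTop (𝓝 0) := by
  refine tendsto_order.2 ⟨fun a ha => .of_forall fun n => ha.trans_le (pdens_nonneg A n),
    fun ε hε => ?_⟩
  obtain ⟨k, hk⟩ := exists_nat_one_div_lt hε
  obtain ⟨j, hj⟩ := h (k + 1) k.succ_pos
  set c := (A \ {m | m % (k + 1) = j}).ncard
  have hbound : Tendsto (fun n : ℕ => 1 / ((k + 1 : ℕ) : ℝ) + (1 + c) / n) atTop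
      (𝓝 (1 / ((k : ℝ) + 1))) := by
    simpa using (tendsto_const_nhds (x := 1 / ((k + 1 : ℕ) : ℝ))).add
      (tendsto_const_div_atTop_nhds_zero_nat (1 + (c : ℝ)))
  filter_upwards [hbound.eventually (gt_mem_nhds hk)] with n hn
  exact (pdens_le_of_diff_mod_eq_finite hj n).trans_lt hn

theorem stmt18 (A : Set ℕ) (hinf : A.Infinite)
    (hcoh : ∀ S : Set ℕ, ComputablePred (· ∈ S) → (A ∩ S).Finite ∨ (A ∩ Sᶜ).Finite) :
    Tendsto (pdens A) atTop (nhds 0) := by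
  refine tendsto_pdens_zero_of_forall_diff_mod_eq_finite fun k hk => ?_
  have hcover : ⋃ j : Fin k, {m : ℕ | m % k = j} = Set.univ :=
    Set.eq_univ_of_forall fun m => Set.mem_iUnion.mpr ⟨⟨m % k, Nat.mod_lt m hk⟩, rfl⟩
  obtain ⟨j, hj⟩ := exists_diff_finite_of_cohesive hinf hcoh _
    (fun j : Fin k => computablePred_mod_eq k j) hcover
  exact ⟨j, hj⟩
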